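/- Let C̄ be an r×r integer matrix, t : Fin r → ℤ with t_a C̄_{ab} = t_b C̄_{ba}, δ = det C̄, T = diag(t), and Λ = δ T C̄⁻¹ (a symmetric matrix). Given k ≥ 1, nonnegative integer arrays m = (m_{a,i}) and n = (n_{a,i}) for a ∈ Fin r, i ∈ {1,…,k}, and integers ℓ_a, define q_{a,i} = ℓ_a + ∑_{j=i+1}^k ∑_b (j-i)(C̄_{ab} m_{b,j} − δ_{ab} n_{b,j}) for 0 ≤ i ≤ k, and Q(m,n) = (1/2) ∑_{i,j=1}^k ∑_{a,b} t_a min(i,j) m_{a,i}(C̄_{ab} m_{b,j} − 2 δ_{ab} n_{b,j}). Then, writing q_j = (q_{a,j})_a and n_i = (n_{a,i})_a, one has Q(m,n) = (1/(2δ)) [ ∑_{j=1}^k (q_{j-1}−q_j)·Λ(q_{j-1}−q_j) − ∑_{j=1}^k (∑_{i=j}^k n_i)·Λ(∑_{i=j}^k n_i) ]. -/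

import Mathlib

/-!
Write `A = C̄`, `T = diag t`, `u_i = m_i`, `v_i = n_i`. Then `q_{j-1} - q_j = ∑_{i ≥ j} (A u_i - v_i)`,
and expanding both quadratic forms bilinearly turns `∑_{j=1}^k ∑_{i, i' ≥ j}` into
`∑_{i, i'} min(i, i')`. Besides `Λ A = δ T`, symmetrizability (`Aᵀ T = T A`) gives `Aᵀ Λ = δ T`, so
`(A u_i - v_i)·Λ(A u_{i'} - v_{i'}) - v_i·Λ v_{i'}` collapses to `δ` times pairings against `T`;
the two cross terms `u_i·T v_{i'}` and `v_i·T u_{i'}` coincide after the swap `i ↔ i'`.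
-/

open Finset Matrix

theorem Finset.sum_Icc_sum_Icc_sum_Icc_eq_sum_min_nsmul {M : Type*} [AddCommMonoid M]
    (k : ℕ) (f : ℕ → ℕ → M) :
    ∑ j ∈ Icc 1 k, ∑ i ∈ Icc j k, ∑ i' ∈ Icc j k, f i i' =
      ∑ i ∈ Icc 1 k, ∑ i' ∈ Icc 1 k, min i i' • f i i' := by
  rw [sum_comm' (t' := Icc 1 k) (s' := fun i => Icc 1 i)
    (fun j i => by simp only [mem_Icc]; omega)]
  refine sum_congr rfl fun i _ => ?_
  rw [sum_comm' (t' := Icc 1 k) (s' := fun i' => Icc 1 (min i i'))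
    (fun j i' => by simp only [mem_Icc]; omega)]
  refine sum_congr rfl fun i' _ => ?_
  rw [sum_const, Nat.card_Icc, Nat.add_sub_cancel]

section SecondDifference

variable {R : Type*} [CommRing R]

theorem sub_add_one_eq_sum_Icc_of_eq_add_sum_Icc_mul {q F : ℕ → R} {ℓ : R} {k : ℕ}
    (hq : ∀ i, q i = ℓ + ∑ j ∈ Icc (i + 1) k, ((j : R) - i) * F j) (i : ℕ) :
    q i - q (i + 1) = ∑ j ∈ Icc (i + 1) k, F j := by
  have hvanish : ∑ j ∈ Icc (i + 1 + 1) k, ((j : R) - (i + 1 : ℕ)) * F j =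
      ∑ j ∈ Icc (i + 1) k, ((j : R) - (i + 1 : ℕ)) * F j := by
    refine sum_subset (Icc_subset_Icc_left (by omega)) fun j hj hj' => ?_
    obtain rfl : j = i + 1 := by simp only [mem_Icc] at hj hj'; omega
    rw [sub_self, zero_mul]
  rw [hq, hq, hvanish, add_sub_add_left_eq_sub, ← sum_sub_distrib]
  refine sum_congr rfl fun j _ => ?_
  push_cast
  ring

theorem sub_eq_sum_Icc_mulVec_sub {n : Type*} [Fintype n] [DecidableEq n]
    {q : n → ℕ → R} {ℓ : n → R} {A : Matrix n n R} {u v : ℕ → n → R} {k : ℕ}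
    (hq : ∀ a i, q a i = ℓ a + ∑ j ∈ Icc (i + 1) k, ∑ b,
      ((j : R) - i) * (A a b * u j b - if a = b then v j b else 0))
    {j : ℕ} (hj : 1 ≤ j) :
    (fun a => q a (j - 1) - q a j) = ∑ i ∈ Icc j k, (A *ᵥ u i - v i) := by
  obtain ⟨i, rfl⟩ : ∃ i, j = i + 1 := ⟨j - 1, by omega⟩
  ext a
  rw [Nat.add_sub_cancel, Finset.sum_apply]
  refine sub_add_one_eq_sum_Icc_of_eq_add_sum_Icc_mul (ℓ := ℓ a) (fun i => ?_) i
  rw [hq]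
  refine congrArg _ (sum_congr rfl fun j _ => ?_)
  rw [← mul_sum]
  simp only [Pi.sub_apply, mulVec, dotProduct, sum_sub_distrib, sum_ite_eq, mem_univ, if_true]

end SecondDifference

section QuadraticForm

variable {n R : Type*} [Fintype n] [CommRing R]

theorem Matrix.sum_dotProduct_mulVec_sum {ι : Type*} (Λ : Matrix n n R) (s : Finset ι)
    (x y : ι → n → R) :
    (∑ i ∈ s, x i) ⬝ᵥ Λ *ᵥ ∑ i ∈ s, y i = ∑ i ∈ s, ∑ i' ∈ s, x i ⬝ᵥ Λ *ᵥ y i' := by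
  rw [mulVec_sum, sum_dotProduct]
  simp only [dotProduct_sum]

theorem Matrix.IsSymm.dotProduct_mulVec_comm {D : Matrix n n R} (hD : D.IsSymm) (x y : n → R) :
    x ⬝ᵥ D *ᵥ y = y ⬝ᵥ D *ᵥ x := by
  rw [dotProduct_mulVec, dotProduct_comm, ← mulVec_transpose, hD.eq]

variable {Λ A D : Matrix n n R} {c : R}

theorem Matrix.smul_mul_nonsing_inv_mul [DecidableEq n] (hA : IsUnit A.det) :
    c • (D * A⁻¹) * A = c • D := by
  rw [smul_mul, Matrix.mul_assoc, nonsing_inv_mul _ hA, Matrix.mul_one]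

theorem Matrix.transpose_mul_smul_mul_nonsing_inv [DecidableEq n] (hA : IsUnit A.det)
    (hDA : Aᵀ * D = D * A) : Aᵀ * (c • (D * A⁻¹)) = c • D := by
  rw [Matrix.mul_smul, ← Matrix.mul_assoc, hDA, Matrix.mul_assoc, mul_nonsing_inv _ hA,
    Matrix.mul_one]

theorem dotProduct_mulVec_sub_sub_dotProduct_mulVec (hΛA : Λ * A = c • D)
    (hAΛ : Aᵀ * Λ = c • D) (u u' v v' : n → R) :
    (A *ᵥ u - v) ⬝ᵥ Λ *ᵥ (A *ᵥ u' - v') - v ⬝ᵥ Λ *ᵥ v' =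
      c * (u ⬝ᵥ D *ᵥ (A *ᵥ u') - u ⬝ᵥ D *ᵥ v' - v ⬝ᵥ D *ᵥ u') := by
  have hleft : ∀ w, (A *ᵥ u) ⬝ᵥ Λ *ᵥ w = c * (u ⬝ᵥ D *ᵥ w) := fun w => by
    rw [← vecMul_transpose, ← dotProduct_mulVec, mulVec_mulVec, hAΛ, smul_mulVec,
      dotProduct_smul, smul_eq_mul]
  have hright : ∀ w, w ⬝ᵥ Λ *ᵥ (A *ᵥ u') = c * (w ⬝ᵥ D *ᵥ u') := fun w => by
    rw [mulVec_mulVec, hΛA, smul_mulVec, dotProduct_smul, smul_eq_mul]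
  rw [mulVec_sub, dotProduct_sub, sub_dotProduct, sub_dotProduct, hleft, hleft, hright]
  ring

theorem sum_Icc_dotProduct_mulVec_sub_dotProduct_mulVec (hΛA : Λ * A = c • D)
    (hAΛ : Aᵀ * Λ = c • D) (hD : D.IsSymm) (u v : ℕ → n → R) (k : ℕ) :
    ∑ j ∈ Icc 1 k, ((∑ i ∈ Icc j k, (A *ᵥ u i - v i)) ⬝ᵥ Λ *ᵥ ∑ i ∈ Icc j k, (A *ᵥ u i - v i) -
        (∑ i ∈ Icc j k, v i) ⬝ᵥ Λ *ᵥ ∑ i ∈ Icc j k, v i) =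
      c * ∑ i ∈ Icc 1 k, ∑ i' ∈ Icc 1 k,
        (min i i' : ℕ) * (u i ⬝ᵥ D *ᵥ (A *ᵥ u i' - 2 • v i')) := by
  have hswap : ∑ i ∈ Icc 1 k, ∑ i' ∈ Icc 1 k, (min i i' : ℕ) * (v i ⬝ᵥ D *ᵥ u i') =
      ∑ i ∈ Icc 1 k, ∑ i' ∈ Icc 1 k, (min i i' : ℕ) * (u i ⬝ᵥ D *ᵥ v i') := by
    rw [sum_comm]
    exact sum_congr rfl fun i _ => sum_congr rfl fun i' _ => by
      rw [min_comm, hD.dotProduct_mulVec_comm]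
  calc _ = ∑ i ∈ Icc 1 k, ∑ i' ∈ Icc 1 k, (min i i' : ℕ) *
        (c * (u i ⬝ᵥ D *ᵥ (A *ᵥ u i') - u i ⬝ᵥ D *ᵥ v i' - v i ⬝ᵥ D *ᵥ u i')) := by
        simp only [sum_dotProduct_mulVec_sum, ← sum_sub_distrib,
          sum_Icc_sum_Icc_sum_Icc_eq_sum_min_nsmul, nsmul_eq_mul,
          dotProduct_mulVec_sub_sub_dotProduct_mulVec hΛA hAΛ]
    _ = c * ∑ i ∈ Icc 1 k, ∑ i' ∈ Icc 1 k, (min i i' : ℕ) * (u i ⬝ᵥ D *ᵥ (A *ᵥ u i' - 2 • v i'))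
        + c * (∑ i ∈ Icc 1 k, ∑ i' ∈ Icc 1 k, (min i i' : ℕ) * (u i ⬝ᵥ D *ᵥ v i') -
          ∑ i ∈ Icc 1 k, ∑ i' ∈ Icc 1 k, (min i i' : ℕ) * (v i ⬝ᵥ D *ᵥ u i')) := by
        simp only [mul_sum, ← sum_sub_distrib, ← sum_add_distrib, mulVec_sub, mulVec_smul,
          dotProduct_sub, dotProduct_smul]
        exact sum_congr rfl fun i _ => sum_congr rfl fun i' _ => by ring
    _ = _ := by rw [hswap, sub_self, mul_zero, add_zero]

theorem sum_sum_mul_sub_two_mul_ite [DecidableEq n] (d : n → R) (w : R) (x y z : n → R) :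
    ∑ a, ∑ b, d a * w * x a * (A a b * y b - 2 * if a = b then z b else 0) =
      w * (x ⬝ᵥ diagonal d *ᵥ (A *ᵥ y - 2 • z)) := by
  simp only [dotProduct, mulVec_diagonal]
  simp only [mul_sub, sum_sub_distrib, mul_ite, mul_zero, sum_ite_eq, mem_univ, if_true,
    mulVec, dotProduct, Pi.sub_apply, Pi.smul_apply, mul_sum]
  exact congrArg₂ _ (sum_congr rfl fun a _ => sum_congr rfl fun b _ => by ring)
    (sum_congr rfl fun a _ => by ring)

end QuadraticForm

theorem stmt2_general (r k : ℕ)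
    (C : Matrix (Fin r) (Fin r) ℤ) (hC : C.det ≠ 0)
    (t : Fin r → ℤ)
    (hsymm : ∀ a b, t a * C a b = t b * C b a)
    (m n : Fin r → ℕ → ℕ) (ℓ : Fin r → ℤ)
    (Λ : Matrix (Fin r) (Fin r) ℚ)
    (hΛ : Λ = (C.det : ℚ) •
      (Matrix.diagonal (fun a => (t a : ℚ)) * (C.map (Int.cast : ℤ → ℚ))⁻¹))
    (q : Fin r → ℕ → ℚ)
    (hq : ∀ a i, q a i = (ℓ a : ℚ) +
      ∑ j ∈ Finset.Icc (i + 1) k, ∑ b : Fin r,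
        ((j : ℚ) - (i : ℚ)) *
          ((C a b : ℚ) * (m b j : ℚ) - (if a = b then (n b j : ℚ) else 0)))
    (Q : ℚ)
    (hQ : Q = (1 / 2) * ∑ i ∈ Finset.Icc 1 k, ∑ j ∈ Finset.Icc 1 k,
      ∑ a : Fin r, ∑ b : Fin r,
        (t a : ℚ) * (min i j : ℕ) * (m a i : ℚ) *
          ((C a b : ℚ) * (m b j : ℚ) - 2 * (if a = b then (n b j : ℚ) else 0))) :
    Q = (1 / (2 * (C.det : ℚ))) *
      ((∑ j ∈ Finset.Icc 1 k,
          dotProduct (fun a => q a (j - 1) - q a j)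
            (Λ.mulVec (fun a => q a (j - 1) - q a j))) -
        ∑ j ∈ Finset.Icc 1 k,
          dotProduct (fun a => ∑ i ∈ Finset.Icc j k, (n a i : ℚ))
            (Λ.mulVec (fun a => ∑ i ∈ Finset.Icc j k, (n a i : ℚ)))) := by
  set A := C.map (Int.cast : ℤ → ℚ)
  set T := diagonal fun a => (t a : ℚ)
  set u : ℕ → Fin r → ℚ := fun i a => m a i
  set v : ℕ → Fin r → ℚ := fun i a => n a i
  have hδ : (C.det : ℚ) ≠ 0 := Int.cast_ne_zero.mpr hC
  have hA : IsUnit A.det := by rw [← Int.cast_det]; exact hδ.isUnit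
  have hTA : Aᵀ * T = T * A := by
    ext a b
    simp only [A, T, mul_diagonal, diagonal_mul, transpose_apply, map_apply]
    exact_mod_cast ((hsymm a b).trans (mul_comm _ _)).symm
  have hΛA : Λ * A = (C.det : ℚ) • T := by rw [hΛ, smul_mul_nonsing_inv_mul hA]
  have hAΛ : Aᵀ * Λ = (C.det : ℚ) • T := by rw [hΛ, transpose_mul_smul_mul_nonsing_inv hA hTA]
  have hdiff : ∀ j ∈ Icc 1 k,
      (fun a => q a (j - 1) - q a j) = ∑ i ∈ Icc j k, (A *ᵥ u i - v i) := fun j hj =>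
    sub_eq_sum_Icc_mulVec_sub (ℓ := fun a => (ℓ a : ℚ)) hq (mem_Icc.mp hj).1
  have hsum : ∀ j, (fun a => ∑ i ∈ Icc j k, (n a i : ℚ)) = ∑ i ∈ Icc j k, v i := fun j => by
    ext a; rw [Finset.sum_apply]
  have hQ' : Q = 1 / 2 * ∑ i ∈ Icc 1 k, ∑ j ∈ Icc 1 k,
      ((min i j : ℕ) : ℚ) * (u i ⬝ᵥ T *ᵥ (A *ᵥ u j - 2 • v j)) :=
    hQ.trans (congrArg _ (sum_congr rfl fun i _ => sum_congr rfl fun j _ =>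
      sum_sum_mul_sub_two_mul_ite _ _ _ _ _))
  conv_rhs => rw [← sum_sub_distrib, sum_congr rfl fun j hj => by rw [hdiff j hj, hsum j],
    sum_Icc_dotProduct_mulVec_sub_dotProduct_mulVec hΛA hAΛ (isSymm_diagonal _)]
  rw [hQ']
  field_simp

/-- Lemma 4.4 of the paper: with `Λ = δ • (T * C̄⁻¹)` symmetric,
the quadratic form `Q(m, n)` of the fermionic sum can be rewritten as
`(1/(2δ)) [ ∑_{j=1}^k (q_{j-1} − q_j)·Λ(q_{j-1} − q_j)
            − ∑_{j=1}^k (∑_{i=j}^k n_i)·Λ(∑_{i=j}^k n_i) ]`,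
where `q_{a,i} = ℓ_a + ∑_{j=i+1}^k ∑_b (j−i)(C̄_{ab} m_{b,j} − δ_{ab} n_{b,j})`. -/
theorem stmt2 (r k : ℕ) (hk : 1 ≤ k)
    (C : Matrix (Fin r) (Fin r) ℤ) (hC : C.det ≠ 0)
    (t : Fin r → ℤ) (ht : ∀ a, 0 < t a)
    (hsymm : ∀ a b, t a * C a b = t b * C b a)
    (m n : Fin r → ℕ → ℕ) (ℓ : Fin r → ℤ)
    (Λ : Matrix (Fin r) (Fin r) ℚ)
    (hΛ : Λ = (C.det : ℚ) •
      (Matrix.diagonal (fun a => (t a : ℚ)) * (C.map (Int.cast : ℤ → ℚ))⁻¹))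
    (q : Fin r → ℕ → ℚ)
    (hq : ∀ a i, q a i = (ℓ a : ℚ) +
      ∑ j ∈ Finset.Icc (i + 1) k, ∑ b : Fin r,
        ((j : ℚ) - (i : ℚ)) *
          ((C a b : ℚ) * (m b j : ℚ) - (if a = b then (n b j : ℚ) else 0)))
    (Q : ℚ)
    (hQ : Q = (1 / 2) * ∑ i ∈ Finset.Icc 1 k, ∑ j ∈ Finset.Icc 1 k,
      ∑ a : Fin r, ∑ b : Fin r,
        (t a : ℚ) * (min i j : ℕ) * (m a i : ℚ) *
          ((C a b : ℚ) * (m b j : ℚ) - 2 * (if a = b then (n b j : ℚ) else 0))) :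
    Q = (1 / (2 * (C.det : ℚ))) *
      ((∑ j ∈ Finset.Icc 1 k,
          dotProduct (fun a => q a (j - 1) - q a j)
            (Λ.mulVec (fun a => q a (j - 1) - q a j))) -
        ∑ j ∈ Finset.Icc 1 k,
          dotProduct (fun a => ∑ i ∈ Finset.Icc j k, (n a i : ℚ))
            (Λ.mulVec (fun a => ∑ i ∈ Finset.Icc j k, (n a i : ℚ)))) :=
  stmt2_general r k C hC t hsymm m n ℓ Λ hΛ q hq Q hQ
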